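/- Let A = ⟨Q, Σ⟩ be a DFA with a fixed linear order on Σ, and let ≺ denote the induced shortlex order on Σ*. Suppose w ∈ Σ* is the ≺-least word among all words w' with excl(w') = excl(w) and dupl(w') = dupl(w). Then every prefix u of w is the ≺-least word among all words u' with excl(u') = excl(u) and dupl(u') = dupl(u). -/

import Mathlib

open Finset

/-- The action of a word (list of letters) on a state, applying letters left to right. -/
def act {Q A : Type*} (δ : Q → A → Q) (q : Q) (w : List A) : Q := w.foldl δ q

/-- The image of a set of states under the action of a word. -/
def img {Q A : Type*} [DecidableEq Q] (δ : Q → A → Q) (P : Finset Q) (w : List A) : Finset Q :=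
  P.image (fun q => act δ q w)

/-- `excl δ w = Q \ Q·w`. -/
def excl {Q A : Type*} [Fintype Q] [DecidableEq Q] (δ : Q → A → Q) (w : List A) : Finset Q :=
  Finset.univ \ img δ Finset.univ w

/-- `dupl δ w` : the set of states with at least two preimages under the action of `w`. -/
def dupl {Q A : Type*} [Fintype Q] [DecidableEq Q] (δ : Q → A → Q) (w : List A) : Finset Q :=
  Finset.univ.filter (fun p => ∃ q₁ q₂ : Q, q₁ ≠ q₂ ∧ act δ q₁ w = p ∧ act δ q₂ w = p)

/-- A DFA is completely reachable if every nonempty subset of states is the image of the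
full state set under the action of some word. -/
def CompletelyReachable {Q A : Type*} [Fintype Q] [DecidableEq Q] (δ : Q → A → Q) : Prop :=
  ∀ P : Finset Q, P.Nonempty → ∃ w : List A, img δ Finset.univ w = P

/-- The shortlex order on words induced by a linear order on the alphabet. -/
def Shortlex {A : Type*} [LinearOrder A] (w w' : List A) : Prop :=
  w.length < w'.length ∨ (w.length = w'.length ∧ List.Lex (· < ·) w w')

/-! The pair `(excl u, dupl u)` determines `(excl (u ++ v), dupl (u ++ v))`: `Q·uv = (Q·u)·v`, and a
state is merged by `uv` either because it is the image under `v` of a state already merged by `u`,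
or because `v` merges two distinct states of `Q·u`. Hence a word `u'` with the same pair as `u`
gives a word `u'v` with the same pair as `w = uv`, and since a common suffix does not affect the
comparison of equal-length words, `u' ≺ u` would give `u'v ≺ w`. -/

section Automaton

variable {Q A : Type*} (δ : Q → A → Q)

lemma act_append (q : Q) (u v : List A) : act δ q (u ++ v) = act δ (act δ q u) v :=
  List.foldl_append

variable [DecidableEq Q]

lemma img_append (P : Finset Q) (u v : List A) : img δ P (u ++ v) = img δ (img δ P u) v := by
  simp only [img, Finset.image_image, act_append, Function.comp_def]

variable [Fintype Q]

lemma excl_eq_compl_img (w : List A) : excl δ w = (img δ univ w)ᶜ :=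
  (compl_eq_univ_sdiff _).symm

lemma excl_append_congr {u u' : List A} (h : excl δ u' = excl δ u) (v : List A) :
    excl δ (u' ++ v) = excl δ (u ++ v) := by
  simp only [excl_eq_compl_img, compl_inj_iff, img_append] at h ⊢
  rw [h]

lemma mem_dupl_iff {w : List A} {p : Q} :
    p ∈ dupl δ w ↔ ∃ q₁ q₂ : Q, q₁ ≠ q₂ ∧ act δ q₁ w = p ∧ act δ q₂ w = p := by
  simp [dupl]

lemma mem_dupl_append_iff {u v : List A} {p : Q} :
    p ∈ dupl δ (u ++ v) ↔ (∃ r ∈ dupl δ u, act δ r v = p) ∨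
      ∃ r₁ ∈ img δ univ u, ∃ r₂ ∈ img δ univ u, r₁ ≠ r₂ ∧ act δ r₁ v = p ∧ act δ r₂ v = p := by
  simp only [mem_dupl_iff, act_append, img, mem_image, mem_univ, true_and]
  constructor
  · rintro ⟨q₁, q₂, hne, h₁, h₂⟩
    by_cases hmerge : act δ q₁ u = act δ q₂ u
    · exact .inl ⟨_, ⟨q₁, q₂, hne, rfl, hmerge.symm⟩, h₁⟩
    · exact .inr ⟨_, ⟨q₁, rfl⟩, _, ⟨q₂, rfl⟩, hmerge, h₁, h₂⟩
  · rintro (⟨r, ⟨q₁, q₂, hne, rfl, h₂⟩, hr⟩ | ⟨_, ⟨q₁, rfl⟩, _, ⟨q₂, rfl⟩, hne, h₁, h₂⟩)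
    · exact ⟨q₁, q₂, hne, hr, h₂ ▸ hr⟩
    · exact ⟨q₁, q₂, fun h => hne (h ▸ rfl), h₁, h₂⟩

lemma dupl_append_congr {u u' : List A} (hexcl : excl δ u' = excl δ u)
    (hdupl : dupl δ u' = dupl δ u) (v : List A) : dupl δ (u' ++ v) = dupl δ (u ++ v) := by
  have himg : img δ univ u' = img δ univ u := by
    simpa only [excl_eq_compl_img, compl_inj_iff] using hexcl
  ext p
  rw [mem_dupl_append_iff, mem_dupl_append_iff, himg, hdupl]

end Automaton

lemma List.Lex.of_append_of_length_eq {α : Type*} {r : α → α → Prop} :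
    ∀ {u u' : List α} (v v' : List α), u.length = u'.length →
      List.Lex r (u ++ v) (u' ++ v') → u ≠ u' → List.Lex r u u'
  | [], [], _, _, _, _, hne => absurd rfl hne
  | a :: u, b :: u', v, v', hlen, hlex, hne => by
    cases hlex with
    | rel hab => exact .rel hab
    | cons htail =>
      exact .cons (of_append_of_length_eq v v' (Nat.succ.inj hlen) htail fun h => hne (h ▸ rfl))

lemma Shortlex.of_append_right {α : Type*} [LinearOrder α] {u u' v : List α}
    (h : Shortlex (u ++ v) (u' ++ v)) (hne : u ≠ u') : Shortlex u u' := by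
  simp only [Shortlex, List.length_append, Nat.add_lt_add_iff_right, Nat.add_right_cancel_iff]
    at h
  exact h.imp_right fun ⟨hlen, hlex⟩ => ⟨hlen, hlex.of_append_of_length_eq v v hlen hne⟩

/-- If w is the shortlex-least word with its pair (excl, dupl), then every prefix u of w is
the shortlex-least word with its pair (excl, dupl). -/
theorem prefix_of_shortlex_minimal {Q A : Type*} [Fintype Q] [DecidableEq Q] [LinearOrder A]
    (δ : Q → A → Q) (w : List A)
    (hmin : ∀ w' : List A, excl δ w' = excl δ w → dupl δ w' = dupl δ w → w' ≠ w →
      Shortlex w w')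
    (u v : List A) (huv : w = u ++ v) :
    ∀ u' : List A, excl δ u' = excl δ u → dupl δ u' = dupl δ u → u' ≠ u → Shortlex u u' := by
  intro u' hexcl hdupl hne
  subst huv
  refine (hmin (u' ++ v) (excl_append_congr δ hexcl v) (dupl_append_congr δ hexcl hdupl v)
    ?_).of_append_right hne.symm
  exact fun h => hne (List.append_cancel_right h)
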